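/- For every integer k and every integer n ≥ 1, one has C_{n-1}^{(k-1)}(1) = Σ_{l=0}^{n-1} (-1)^l l! C(n, l+1) C_{n-l-1}^{(k)}. -/

import Mathlib

open PowerSeries Finset

/-- Composition `F(G(t))` of formal power series (intended for `G` with zero
constant term, in which case `coeff n (G ^ m) = 0` for `m > n` and the finite
sum below computes the usual composition). -/
noncomputable def psComp (F G : PowerSeries ℝ) : PowerSeries ℝ :=
  PowerSeries.mk fun n => ∑ m ∈ Finset.range (n + 1),
    (PowerSeries.coeff m F) * (PowerSeries.coeff n (G ^ m))

/-- The formal power series of `log (1 + t)`. -/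
noncomputable def logSeries : PowerSeries ℝ :=
  PowerSeries.mk fun n => if n = 0 then 0 else (-1) ^ (n + 1) / n

/-- The polylogarithm factorial function `Lif_k(t) = ∑_{m ≥ 0} t^m / (m! (m+1)^k)`. -/
noncomputable def Lif (k : ℤ) : PowerSeries ℝ :=
  PowerSeries.mk fun m => 1 / ((m.factorial : ℝ) * ((m : ℝ) + 1) ^ k)

/-- The poly-Cauchy polynomial of the first kind `C_n^{(k)}(x)`, defined by
`Lif_k(log(1+t)) / (1+t)^x = ∑_{n ≥ 0} C_n^{(k)}(x) t^n / n!`, where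
`(1+t)^{-x} = exp (-x · log (1+t))`. -/
noncomputable def polyCauchy (k : ℤ) (n : ℕ) (x : ℝ) : ℝ :=
  (n.factorial : ℝ) * PowerSeries.coeff n
    (psComp (Lif k) logSeries *
      psComp (PowerSeries.rescale (-x) (PowerSeries.exp ℝ)) logSeries)

/-- The (signed) Stirling numbers of the first kind `S₁(l, m)`, defined by
`(log (1+t))^m = m! ∑_{l ≥ m} S₁(l,m) t^l / l!`. -/
noncomputable def S1 (l m : ℕ) : ℝ :=
  (l.factorial : ℝ) / (m.factorial : ℝ) * PowerSeries.coeff l (logSeries ^ m)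

/-- The ordinary Bernoulli numbers, via `t/(e^t - 1) = ∑ B_n t^n/n!`;
here `(mk fun m => 1/(m+1)!)` is the series `(e^t - 1)/t`. -/
noncomputable def Bern (n : ℕ) : ℝ :=
  (n.factorial : ℝ) * PowerSeries.coeff n
    (PowerSeries.mk fun m => (1 : ℝ) / (m + 1).factorial)⁻¹

/-- The Bernoulli polynomial of order `r`, via `(t/(e^t-1))^r e^{xt} = ∑ B_n^{(r)}(x) t^n/n!`. -/
noncomputable def bernPoly (r : ℕ) (n : ℕ) (x : ℝ) : ℝ :=
  (n.factorial : ℝ) * PowerSeries.coeff n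
    (((PowerSeries.mk fun m => (1 : ℝ) / (m + 1).factorial)⁻¹) ^ r *
      PowerSeries.rescale x (PowerSeries.exp ℝ))

/-- The series `log(1+t)/t`, so that `t / log(1+t) = Dlog⁻¹`. -/
noncomputable def Dlog : PowerSeries ℝ :=
  PowerSeries.mk fun n => (-1) ^ n / ((n : ℝ) + 1)

/-- The Cauchy numbers of the first kind, via `t/log(1+t) = ∑ C_n t^n/n!`. -/
noncomputable def cauchyNum (n : ℕ) : ℝ :=
  (n.factorial : ℝ) * PowerSeries.coeff n Dlog⁻¹

/-- The numbers `T_n^{(r,k)}`, via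
`(t/log(1+t))^r · Lif_k(log(1+t)) = ∑ T_n^{(r,k)} t^n/n!`. -/
noncomputable def T (r : ℕ) (k : ℤ) (n : ℕ) : ℝ :=
  (n.factorial : ℝ) * PowerSeries.coeff n (Dlog⁻¹ ^ r * psComp (Lif k) logSeries)

/-- The rising factorial `x^{(m)} = x (x+1) ⋯ (x+m-1)`. -/
noncomputable def risingFactorial (x : ℝ) (m : ℕ) : ℝ :=
  ∏ i ∈ Finset.range m, (x + i)

/-- Carlitz's polynomials `β_n^{(r)}(x)`, via `(t/log(1+t))^r (1+t)^x = ∑ β_n^{(r)}(x) t^n/n!`,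
where `(1+t)^x = exp (x log (1+t))`. -/
noncomputable def carlitz (r : ℕ) (n : ℕ) (x : ℝ) : ℝ :=
  (n.factorial : ℝ) * PowerSeries.coeff n
    (Dlog⁻¹ ^ r * psComp (PowerSeries.rescale x (PowerSeries.exp ℝ)) logSeries)

/-! With `L = log (1 + t)` and `F_k = Lif_k (L)`: termwise, `(t · Lif_k(t))' = Lif_{k-1}(t)`, so the
chain rule gives `Lif_{k-1}(L) · L' = (L · F_k)'`. Moreover `(1 + t)⁻¹ = exp (-L) = L'`, hence
`C_{n-1}^{(k-1)}(1) = (n-1)! [t^{n-1}] (L · F_k)' = n! [t^n] (L · F_k)`, and expanding the product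
with `[t^{l+1}] L = (-1)^l / (l + 1)` and `C_m^{(k)} = m! [t^m] F_k` gives the sum. -/

namespace PowerSeries

variable {R : Type*} [CommRing R]

theorem coeff_pow_eq_zero_of_lt {G : R⟦X⟧} (hG : constantCoeff G = 0) {m n : ℕ} (h : n < m) :
    coeff n (G ^ m) = 0 :=
  coeff_of_lt_order _ <| (Nat.cast_lt.2 h).trans_le (le_order_pow_of_constantCoeff_eq_zero m hG)

theorem constantCoeff_subst_of_constantCoeff_eq_zero (f : R⟦X⟧) {g : R⟦X⟧}
    (hg : constantCoeff g = 0) : constantCoeff (f.subst g) = constantCoeff f := by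
  rw [← coeff_zero_eq_constantCoeff_apply, coeff_subst' (HasSubst.of_constantCoeff_zero' hg),
    finsum_eq_single _ 0 fun d hd => by
      rw [coeff_pow_eq_zero_of_lt hg (Nat.pos_of_ne_zero hd), smul_zero]]
  simp

theorem coeff_derivative_X_mul (f : R⟦X⟧) (n : ℕ) :
    coeff n (d⁄dX R (X * f)) = coeff n f * (n + 1) := by
  rw [coeff_derivative, coeff_succ_X_mul]

theorem derivative_rescale (a : R) (f : R⟦X⟧) :
    d⁄dX R (rescale a f) = C a * rescale a (d⁄dX R f) := by
  ext n
  simp only [coeff_derivative, coeff_rescale, coeff_C_mul, pow_succ]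
  ring

variable {A : Type*} [CommRing A] [Algebra ℚ A]

theorem one_add_X_mul_derivative_log : (1 + X) * d⁄dX A (log A) = 1 := by
  ext n
  rcases n with _ | n
  · simp [deriv_log]
  · simp [deriv_log, add_mul, coeff_succ_X_mul, pow_succ]

theorem rescale_neg_one_exp_subst_log :
    (rescale (-1) (exp A)).subst (log A) = d⁄dX A (log A) := by
  set E := (rescale (-1) (exp A)).subst (log A)
  have hE : d⁄dX A E = -E * d⁄dX A (log A) := by
    rw [derivative_subst HasSubst.log, derivative_rescale, derivative_exp, map_neg, map_one,
      neg_one_mul, ← coe_substAlgHom HasSubst.log, map_neg, coe_substAlgHom]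
  have h_inv : (1 + X) * E = 1 := by
    have : IsAddTorsionFree A := .of_module_rat A
    refine derivative.ext ?_ ?_
    · rw [Derivation.leibniz, hE, derivative_one, map_add, derivative_one, derivative_X]
      linear_combination -E * one_add_X_mul_derivative_log (A := A)
    · rw [map_mul, constantCoeff_subst_of_constantCoeff_eq_zero _ constantCoeff_log,
        ← coeff_zero_eq_constantCoeff_apply (rescale _ _), coeff_rescale]
      simp
  calc E = E * ((1 + X) * d⁄dX A (log A)) := by rw [one_add_X_mul_derivative_log, mul_one]
    _ = d⁄dX A (log A) := by rw [← mul_assoc, mul_comm E, h_inv, one_mul]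

end PowerSeries

open scoped Nat

theorem psComp_eq_subst (F : ℝ⟦X⟧) {G : ℝ⟦X⟧} (hG : constantCoeff G = 0) :
    psComp F G = F.subst G := by
  ext n
  rw [psComp, coeff_mk, coeff_subst' (HasSubst.of_constantCoeff_zero' hG),
    finsum_eq_sum_of_support_subset _ (s := range (n + 1))]
  · simp [smul_eq_mul]
  · intro m hm
    rw [Function.mem_support] at hm
    rw [coe_range, Set.mem_Iio]
    by_contra! h
    exact hm (by rw [coeff_pow_eq_zero_of_lt hG (by omega), smul_zero])

theorem logSeries_eq_log : logSeries = log ℝ := by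
  ext n
  simp [logSeries]

theorem polyCauchy_zero_eq (k : ℤ) (m : ℕ) :
    polyCauchy k m 0 = m ! * coeff m ((Lif k).subst (log ℝ)) := by
  rw [polyCauchy, neg_zero, rescale_zero_apply, constantCoeff_exp, logSeries_eq_log,
    psComp_eq_subst _ constantCoeff_log, psComp_eq_subst _ constantCoeff_log, subst_C, map_one,
    mul_one]

theorem polyCauchy_one_eq (k : ℤ) (m : ℕ) :
    polyCauchy k m 1 = m ! * coeff m ((Lif k).subst (log ℝ) * d⁄dX ℝ (log ℝ)) := by
  rw [polyCauchy, logSeries_eq_log, psComp_eq_subst _ constantCoeff_log,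
    psComp_eq_subst _ constantCoeff_log, rescale_neg_one_exp_subst_log]

theorem derivative_X_mul_Lif (k : ℤ) : d⁄dX ℝ (X * Lif k) = Lif (k - 1) := by
  ext m
  rw [coeff_derivative_X_mul, Lif, Lif, coeff_mk, coeff_mk, zpow_sub_one₀ (by positivity)]
  field_simp

theorem Lif_sub_one_subst_log_mul_derivative_log (k : ℤ) :
    (Lif (k - 1)).subst (log ℝ) * d⁄dX ℝ (log ℝ) = d⁄dX ℝ (log ℝ * (Lif k).subst (log ℝ)) := by
  rw [← derivative_X_mul_Lif, ← derivative_subst HasSubst.log, subst_mul HasSubst.log,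
    subst_X HasSubst.log]

/-- special case of Theorem 5 of the paper. -/
theorem polyCauchy_one_eq_sum (k : ℤ) (n : ℕ) (hn : 1 ≤ n) :
    polyCauchy (k - 1) (n - 1) 1 =
      ∑ l ∈ Finset.range n,
        (-1 : ℝ) ^ l * (l.factorial : ℝ) * (n.choose (l + 1) : ℝ) *
          polyCauchy k (n - l - 1) 0 := by
  obtain ⟨m, rfl⟩ : ∃ m, n = m + 1 := ⟨n - 1, by omega⟩
  rw [add_tsub_cancel_right, polyCauchy_one_eq, Lif_sub_one_subst_log_mul_derivative_log,
    coeff_derivative, coeff_mul, Nat.sum_antidiagonal_eq_sum_range_succ_mk, sum_range_succ',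
    coeff_zero_eq_constantCoeff_apply, constantCoeff_log, zero_mul, add_zero, sum_mul, mul_sum]
  refine sum_congr rfl fun l hl => ?_
  have hfac : ((m + 1).choose (l + 1) : ℝ) * (l + 1)! * (m - l)! = (m + 1)! := by
    have := Nat.choose_mul_factorial_mul_factorial (Nat.succ_le_succ (mem_range_succ_iff.1 hl))
    rw [Nat.succ_sub_succ] at this
    exact_mod_cast this
  simp only [Nat.succ_sub_succ, show m + 1 - l - 1 = m - l by omega]
  rw [polyCauchy_zero_eq, coeff_log, if_neg l.succ_ne_zero]
  push_cast [Nat.factorial_succ] at hfac ⊢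
  field_simp
  linear_combination (-(coeff (m - l) ((Lif k).subst (log ℝ)) * (-1) ^ l)) * hfac
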